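/- For every natural number k, the set { n : ℕ | catsize(n) = k } is finite and has exactly C_k elements, where C_k denotes the k-th Catalan number. -/

import Mathlib

/-- The pairing function `c`. -/
def c (i j : ℕ) : ℕ := if Odd j then 2 ^ (i + 1) * j else 2 ^ (i + 1) * (j + 1) - 1

/-- The inverse of `c` on positive naturals (returns `(0,0)` at `0`). -/
def c' (n : ℕ) : ℕ × ℕ :=
  (padicValNat 2 (n + n % 2) - 1, (n + n % 2) / 2 ^ padicValNat 2 (n + n % 2) - n % 2)

lemma c'_fst_lt {n : ℕ} (hn : 0 < n) : (c' n).1 < n := by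
  have hm : 0 < n + n % 2 := by omega
  have hdvd : (2 : ℕ) ^ padicValNat 2 (n + n % 2) ∣ (n + n % 2) := pow_padicValNat_dvd
  have hle : (2 : ℕ) ^ padicValNat 2 (n + n % 2) ≤ n + n % 2 := Nat.le_of_dvd hm hdvd
  have hlt : padicValNat 2 (n + n % 2) < 2 ^ padicValNat 2 (n + n % 2) := Nat.lt_two_pow_self
  simp only [c']
  generalize hv : padicValNat 2 (n + n % 2) = v at *
  generalize hp : (2 : ℕ) ^ v = p at *
  omega

lemma c'_snd_lt {n : ℕ} (hn : 0 < n) : (c' n).2 < n := by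
  have hm : 0 < n + n % 2 := by omega
  have h2 : (2 : ℕ) ∣ (n + n % 2) := by omega
  have hv : 1 ≤ padicValNat 2 (n + n % 2) := one_le_padicValNat_of_dvd hm.ne' h2
  have h2le : (2 : ℕ) ≤ 2 ^ padicValNat 2 (n + n % 2) := by
    calc (2:ℕ) = 2 ^ 1 := (pow_one 2).symm
    _ ≤ 2 ^ padicValNat 2 (n + n % 2) := Nat.pow_le_pow_right (by norm_num) hv
  have hle : (n + n % 2) / 2 ^ padicValNat 2 (n + n % 2) ≤ (n + n % 2) / 2 :=
    Nat.div_le_div_left h2le (by norm_num)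
  simp only [c']
  generalize hq : (n + n % 2) / 2 ^ padicValNat 2 (n + n % 2) = q at *
  omega

lemma c'_fst_lt_of_lt {m n : ℕ} (h : m < n) : (c' m).1 < n := by
  rcases Nat.eq_zero_or_pos m with rfl | hm
  · simp [c']; omega
  · exact lt_trans (c'_fst_lt hm) h

lemma c'_snd_lt_of_lt {m n : ℕ} (h : m < n) : (c' m).2 < n := by
  rcases Nat.eq_zero_or_pos m with rfl | hm
  · simp [c']; omega
  · exact lt_trans (c'_snd_lt hm) h

def catsize : ℕ → ℕ
  | 0 => 0
  | n + 1 => 1 + catsize (c' (n + 1)).1 + catsize (c' (n + 1)).2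
  decreasing_by
  · exact c'_fst_lt (Nat.succ_pos n)
  · exact c'_snd_lt (Nat.succ_pos n)

/-!
Decoding `n > 0` as `c i j` and recursing into `i` and `j` identifies `ℕ` with binary trees:
`0` is the leaf and `c i j` is the node whose subtrees are the trees of `i` and `j`. Under this
identification `catsize` counts internal nodes, and binary trees with `k` internal nodes are
counted by `catalan k`.
-/

open BinaryTree

lemma padicValNat_two_pow_mul_of_odd (k : ℕ) {m : ℕ} (hm : Odd m) :
    padicValNat 2 (2 ^ k * m) = k := by
  rw [padicValNat.mul (by positivity) hm.pos.ne', padicValNat.prime_pow,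
    padicValNat.eq_zero_of_not_dvd hm.not_two_dvd_nat, add_zero]

lemma c'_eq_of_add_mod_two_eq {n i m : ℕ} (hm : Odd m) (h : n + n % 2 = 2 ^ (i + 1) * m) :
    c' n = (i, m - n % 2) := by
  simp only [c', h, padicValNat_two_pow_mul_of_odd _ hm, Nat.add_sub_cancel,
    Nat.mul_div_cancel_left _ (Nat.two_pow_pos _)]

lemma c'_c (i j : ℕ) : c' (c i j) = (i, j) := by
  have h2 : 2 ∣ 2 ^ (i + 1) := dvd_pow_self 2 i.succ_ne_zero
  unfold c
  split_ifs with hj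
  · have hmod : 2 ^ (i + 1) * j % 2 = 0 := Nat.mod_eq_zero_of_dvd (h2.mul_right j)
    rw [c'_eq_of_add_mod_two_eq hj (by rw [hmod, add_zero]), hmod, Nat.sub_zero]
  · have hj1 : Odd (j + 1) := Nat.odd_add_one.mpr hj
    obtain ⟨t, ht⟩ := h2.mul_right (j + 1)
    have hpos : 0 < 2 ^ (i + 1) * (j + 1) := by positivity
    have hmod : (2 ^ (i + 1) * (j + 1) - 1) % 2 = 1 := by omega
    rw [c'_eq_of_add_mod_two_eq (i := i) hj1 (by omega), hmod, Nat.add_sub_cancel]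

lemma c_pos (i j : ℕ) : 0 < c i j := by
  unfold c
  split_ifs with hj
  · exact Nat.mul_pos (Nat.two_pow_pos _) hj.pos
  · have : 2 * 1 ≤ 2 ^ (i + 1) * (j + 1) :=
      Nat.mul_le_mul (Nat.one_lt_two_pow i.succ_ne_zero) j.succ_pos
    omega

lemma exists_c_eq_of_pos {n : ℕ} (hn : 0 < n) : ∃ i j, c i j = n := by
  obtain ⟨k, m, hm, hnm⟩ := Nat.exists_eq_two_pow_mul_odd (n := n + n % 2) (by omega)
  obtain ⟨i, rfl⟩ : ∃ i, k = i + 1 := by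
    refine Nat.exists_eq_add_one_of_ne_zero ?_
    rintro rfl
    obtain ⟨r, rfl⟩ := hm
    omega
  refine ⟨i, m - n % 2, ?_⟩
  unfold c
  rcases Nat.mod_two_eq_zero_or_one n with h | h
  · rw [h, Nat.sub_zero, if_pos hm]
    omega
  · have : ¬ Odd (m - 1) := Nat.not_odd_iff_even.mpr (Nat.Odd.sub_odd hm odd_one)
    rw [h, if_neg this, Nat.sub_add_cancel hm.pos]
    omega

lemma catsize_c (i j : ℕ) : catsize (c i j) = 1 + catsize i + catsize j := by
  obtain ⟨n, hn⟩ := Nat.exists_eq_add_one_of_ne_zero (c_pos i j).ne'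
  rw [hn, catsize, ← hn, c'_c]

def ofTree : BinaryTree Unit → ℕ
  | nil => 0
  | node _ l r => c (ofTree l) (ofTree r)

lemma catsize_ofTree (t : BinaryTree Unit) : catsize (ofTree t) = t.numNodes := by
  induction t with
  | nil => rw [ofTree, catsize, numNodes]
  | node _ l r ihl ihr => rw [ofTree, catsize_c, ihl, ihr, numNodes]; ring

lemma ofTree_injective : Function.Injective ofTree := by
  intro s t h
  induction s generalizing t with
  | nil =>
    cases t with
    | nil => rfl
    | node => exact absurd h (c_pos _ _).ne
  | node _ l r ihl ihr =>
    cases t with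
    | nil => exact absurd h (c_pos _ _).ne'
    | node _ l' r' =>
      have := congrArg c' h
      simp only [ofTree, c'_c, Prod.mk.injEq] at this
      rw [ihl this.1, ihr this.2]

lemma ofTree_surjective : Function.Surjective ofTree := by
  intro n
  induction n using Nat.strong_induction_on with
  | _ n ih =>
  rcases Nat.eq_zero_or_pos n with rfl | hn
  · exact ⟨nil, rfl⟩
  obtain ⟨i, j, rfl⟩ := exists_c_eq_of_pos hn
  obtain ⟨l, rfl⟩ := ih i (by simpa [c'_c] using c'_fst_lt hn)
  obtain ⟨r, rfl⟩ := ih j (by simpa [c'_c] using c'_snd_lt hn)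
  exact ⟨node () l r, rfl⟩

lemma setOf_catsize_eq (k : ℕ) :
    {n : ℕ | catsize n = k} = ofTree '' (treesOfNumNodesEq k : Set (BinaryTree Unit)) := by
  rw [coe_treesOfNumNodesEq, ← ofTree_surjective.image_preimage {n | catsize n = k},
    Set.preimage_ofPred_eq]
  simp only [catsize_ofTree]

theorem catsize_fiber_card_eq_catalan (k : ℕ) :
    {n : ℕ | catsize n = k}.Finite ∧ {n : ℕ | catsize n = k}.ncard = catalan k := by
  rw [setOf_catsize_eq]
  refine ⟨(Finset.finite_toSet _).image _, ?_⟩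
  rw [Set.ncard_image_of_injective _ ofTree_injective, Set.ncard_coe_finset,
    treesOfNumNodesEq_card_eq_catalan]
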